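/- arXiv:2502.18659 — 4 statements merged into one kernel-verified Lean document; each statement's English description precedes it below -/
import Mathlib

section
/- Under Assumption (basic coarse structure), applying m steps of forward-backward splitting ζ^{j+1} := prox_{τ_H G_H}(ζ^j − τ_H ∇F_H^k(ζ^j)) to the shifted coarse objective F_H^k(ζ) := F_H(ζ) + ⟨w, ζ − ζ⁰⟩ with w := g₀ − ∇F_H(ζ⁰) for a given vector g₀ ∈ X_H, one obtains ⟨g₀, ζ^m − ζ⁰⟩ + (ε/(2τ_H)) Σ_{j=0}^{m−1} ‖ζ^{j+1} − ζ^j‖² ≤ G_H(ζ⁰) − G_H(ζ^m), where ε := 2 − τ_H L_H > 0. -/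
/-!
Each forward-backward step is a sufficient-decrease step for the shifted objective
`F_H + ⟪w, · - ζ⁰⟫ + G_H`, whose smooth part has gradient `∇F_H + w`: the optimality of the
proximal point (a variational inequality, obtained by comparing with the points of a segment)
combined with the descent lemma for the `L_H`-smooth part gives a decrease of at least
`(ε / (2τ_H)) ‖ζ^{j+1} - ζ^j‖²`. Summing over the steps telescopes, and the first-order
convexity inequality `F_H(ζ^m) ≥ F_H(ζ⁰) + ⟪∇F_H(ζ⁰), ζ^m - ζ⁰⟫` together with
`w + ∇F_H(ζ⁰) = g₀` turns the change of the smooth part into `⟪g₀, ζ^m - ζ⁰⟫`.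
-/

open RealInnerProductSpace

/-- `G` is proper, convex and lower semicontinuous as an extended-real-valued function. -/
def ProperConvexLsc {X : Type*} [NormedAddCommGroup X] [InnerProductSpace ℝ X]
    (G : X → EReal) : Prop :=
  (∃ x, G x ≠ ⊤) ∧ (∀ x, G x ≠ ⊥) ∧
  (∀ x y : X, ∀ a b : ℝ, 0 ≤ a → 0 ≤ b → a + b = 1 →
    G (a • x + b • y) ≤ (a : EReal) * G x + (b : EReal) * G y) ∧
  LowerSemicontinuous G

/-- `p` is the proximal point `prox_{τG}(x)`, i.e. it minimises `z ↦ G z + ‖z - x‖²/(2τ)`. -/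
def IsProx {X : Type*} [NormedAddCommGroup X] [InnerProductSpace ℝ X]
    (τ : ℝ) (G : X → EReal) (x p : X) : Prop :=
  ∀ z : X, G p + ((‖p - x‖ ^ 2 / (2 * τ) : ℝ) : EReal)
    ≤ G z + ((‖z - x‖ ^ 2 / (2 * τ) : ℝ) : EReal)

open Set Filter Topology

section Smooth

variable {X : Type*} [NormedAddCommGroup X] [InnerProductSpace ℝ X] [CompleteSpace X]
  {F : X → ℝ}

theorem HasGradientAt.hasDerivAt_comp_add_smul {x v f' : X} {t : ℝ}
    (h : HasGradientAt F f' (x + t • v)) :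
    HasDerivAt (fun s : ℝ => F (x + s • v)) ⟪f', v⟫ t := by
  have hline : HasDerivAt (fun s : ℝ => x + s • v) v t := by
    simpa using ((hasDerivAt_id t).smul_const v).const_add x
  simpa [InnerProductSpace.toDual_apply_apply, Function.comp_def] using
    h.hasFDerivAt.comp_hasDerivAt t hline

theorem HasGradientAt.add_inner_sub {f' : X} {x : X} (h : HasGradientAt F f' x) (w x₀ : X) :
    HasGradientAt (fun y => F y + ⟪w, y - x₀⟫) (f' + w) x := by
  rw [hasGradientAt_iff_hasFDerivAt, map_add]
  refine h.hasFDerivAt.add ?_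
  convert ((innerSL ℝ w).hasFDerivAt (x := x)).sub_const ⟪w, x₀⟫ using 1
  · ext y
    simp [inner_sub_right]
  · ext y
    simp [InnerProductSpace.toDual_apply_apply]

theorem ConvexOn.inner_le_sub_of_hasGradientAt (hF : ConvexOn ℝ univ F) {f' x : X}
    (h : HasGradientAt F f' x) (y : X) : ⟪f', y - x⟫ ≤ F y - F x := by
  have hline : ConvexOn ℝ univ (fun s : ℝ => F (x + s • (y - x))) := by
    have := hF.comp_affineMap (AffineMap.lineMap x y)
    simpa [Function.comp_def, AffineMap.lineMap_apply, add_comm] using this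
  have hderiv : HasDerivAt (fun s : ℝ => F (x + s • (y - x))) ⟪f', y - x⟫ 0 :=
    HasGradientAt.hasDerivAt_comp_add_smul (by simpa using h)
  simpa [slope_def_field] using
    hline.le_slope_of_hasDerivAt (mem_univ 0) (mem_univ 1) one_pos hderiv

theorem le_add_inner_add_of_lipschitz_gradient {f : X → X} {L : ℝ}
    (hgrad : ∀ x, HasGradientAt F (f x) x) (hlip : ∀ x y, ‖f x - f y‖ ≤ L * ‖x - y‖)
    (x y : X) : F y ≤ F x + ⟪f x, y - x⟫ + L / 2 * ‖y - x‖ ^ 2 := by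
  set v := y - x
  set φ : ℝ → ℝ := fun s => F (x + s • v) - s * ⟪f x, v⟫ - L / 2 * s ^ 2 * ‖v‖ ^ 2
  have hφ : ∀ s, HasDerivAt φ (⟪f (x + s • v) - f x, v⟫ - L * s * ‖v‖ ^ 2) s := by
    intro s
    have := (((hgrad (x + s • v)).hasDerivAt_comp_add_smul).sub
      ((hasDerivAt_id s).mul_const ⟪f x, v⟫)).sub
      (((hasDerivAt_pow 2 s).const_mul (L / 2)).mul_const (‖v‖ ^ 2))
    exact this.congr_deriv (by rw [inner_sub_left]; push_cast; ring)
  have hφ' : ∀ s ∈ interior (Icc (0 : ℝ) 1), ⟪f (x + s • v) - f x, v⟫ - L * s * ‖v‖ ^ 2 ≤ 0 := by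
    intro s hs
    rw [interior_Icc] at hs
    have := hlip (x + s • v) x
    rw [add_sub_cancel_left, norm_smul, Real.norm_of_nonneg hs.1.le] at this
    nlinarith [real_inner_le_norm (f (x + s • v) - f x) v, norm_nonneg v]
  have hanti : AntitoneOn φ (Icc 0 1) :=
    antitoneOn_of_hasDerivWithinAt_nonpos (convex_Icc 0 1)
      (fun s _ => (hφ s).continuousAt.continuousWithinAt)
      (fun s _ => (hφ s).hasDerivWithinAt) hφ'
  have h01 := hanti (left_mem_Icc.2 zero_le_one) (right_mem_Icc.2 zero_le_one) zero_le_one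
  simp only [φ, one_smul, zero_smul, add_zero, one_mul, one_pow, zero_mul, sub_zero,
    mul_one, v, add_sub_cancel] at h01
  linarith

end Smooth

theorem le_of_forall_mem_Ioc_le_add_mul {a b c : ℝ} (h : ∀ t ∈ Ioc (0 : ℝ) 1, a ≤ b + t * c) :
    a ≤ b := by
  have hlim : Tendsto (fun t : ℝ => b + t * c) (𝓝[>] 0) (𝓝 b) := by
    have : Continuous fun t : ℝ => b + t * c := by fun_prop
    simpa using (this.tendsto 0).mono_left nhdsWithin_le_nhds
  exact ge_of_tendsto hlim (eventually_of_mem (Ioc_mem_nhdsGT one_pos) h)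

section Prox

variable {X : Type*} [NormedAddCommGroup X] [InnerProductSpace ℝ X]
  {G : X → EReal} {τ : ℝ} {x p : X}

theorem IsProx.ne_top (hp : IsProx τ G x p) {z : X} (hz : G z ≠ ⊤) : G p ≠ ⊤ := by
  intro hGp
  have h := hp z
  rw [hGp, EReal.top_add_of_ne_bot (EReal.coe_ne_bot _)] at h
  exact EReal.add_ne_top hz (EReal.coe_ne_top _) (top_le_iff.mp h)

theorem IsProx.inner_sub_le
    (hconv : ∀ x y : X, ∀ a b : ℝ, 0 ≤ a → 0 ≤ b → a + b = 1 →
      G (a • x + b • y) ≤ (a : EReal) * G x + (b : EReal) * G y)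
    (hτ : 0 < τ) (hp : IsProx τ G x p) {z : X} {gp gz : ℝ} (hgp : G p = gp) (hgz : G z = gz) :
    ⟪x - p, z - p⟫ ≤ τ * (gz - gp) := by
  -- Compare `p` with the points `p + t • (z - p)` of the segment and let `t → 0`.
  suffices gp ≤ gz - ⟪x - p, z - p⟫ / τ by
    rw [le_sub_iff_add_le, ← le_sub_iff_add_le', div_le_iff₀ hτ] at this
    linarith
  refine le_of_forall_mem_Ioc_le_add_mul (c := ‖z - p‖ ^ 2 / (2 * τ)) fun t ht => ?_
  have hseg : G ((1 - t) • p + t • z) ≤ (((1 - t) * gp + t * gz : ℝ) : EReal) := by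
    simpa [hgp, hgz] using hconv p z (1 - t) t (by linarith [ht.2]) ht.1.le (by ring)
  have hmin := (hp ((1 - t) • p + t • z)).trans (add_le_add_left hseg _)
  rw [hgp] at hmin
  norm_cast at hmin
  have hsq : ‖(1 - t) • p + t • z - x‖ ^ 2
      = ‖p - x‖ ^ 2 - 2 * t * ⟪x - p, z - p⟫ + t ^ 2 * ‖z - p‖ ^ 2 := by
    rw [show (1 - t) • p + t • z - x = (p - x) + t • (z - p) by module, norm_add_sq_real,
      real_inner_smul_right, norm_smul, Real.norm_eq_abs, mul_pow, sq_abs,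
      ← neg_sub x p, inner_neg_left]
    ring
  rw [hsq] at hmin
  have hscaled : t * gp ≤ t * (gz - ⟪x - p, z - p⟫ / τ + t * (‖z - p‖ ^ 2 / (2 * τ))) := by
    field_simp at hmin ⊢
    linarith
  exact le_of_mul_le_mul_left hscaled ht.1

end Prox

theorem IsProx.sufficient_decrease {X : Type*} [NormedAddCommGroup X] [InnerProductSpace ℝ X]
    [CompleteSpace X] {G : X → EReal} {F : X → ℝ} {f : X → X} {τ L : ℝ} {x p : X}
    (hconv : ∀ x y : X, ∀ a b : ℝ, 0 ≤ a → 0 ≤ b → a + b = 1 →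
      G (a • x + b • y) ≤ (a : EReal) * G x + (b : EReal) * G y)
    (hτ : 0 < τ) (hgrad : ∀ x, HasGradientAt F (f x) x)
    (hlip : ∀ x y, ‖f x - f y‖ ≤ L * ‖x - y‖) (hp : IsProx τ G (x - τ • f x) p)
    {gx gp : ℝ} (hgx : G x = gx) (hgp : G p = gp) :
    gp + F p + (2 - τ * L) / (2 * τ) * ‖p - x‖ ^ 2 ≤ gx + F x := by
  have hvi := hp.inner_sub_le hconv hτ hgp hgx
  rw [show x - τ • f x - p = -((p - x) + τ • f x) by abel, show x - p = -(p - x) by abel,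
    inner_neg_neg, inner_add_left, real_inner_self_eq_norm_sq, real_inner_smul_left] at hvi
  have hprox : ‖p - x‖ ^ 2 / τ ≤ gx - gp - ⟪f x, p - x⟫ := by
    rw [div_le_iff₀ hτ]
    linarith
  have hsplit : (2 - τ * L) / (2 * τ) * ‖p - x‖ ^ 2 = ‖p - x‖ ^ 2 / τ - L / 2 * ‖p - x‖ ^ 2 := by
    field_simp
  linarith [le_add_inner_add_of_lipschitz_gradient hgrad hlip x p]

theorem add_sum_range_le_of_succ_add_le {V d : ℕ → ℝ} {m : ℕ}
    (h : ∀ j < m, V (j + 1) + d j ≤ V j) : V m + ∑ j ∈ Finset.range m, d j ≤ V 0 := by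
  induction m with
  | zero => simp
  | succ m ih =>
    rw [Finset.sum_range_succ]
    linarith [ih fun j hj => h j (by omega), h m m.lt_succ_self]

theorem coarse_descent_lemma_general
    {X : Type*} [NormedAddCommGroup X] [InnerProductSpace ℝ X] [CompleteSpace X]
    (FH : X → ℝ) (fH : X → X) (LH τH : ℝ)
    (hFconv : ConvexOn ℝ Set.univ FH)
    (hgrad : ∀ x, HasGradientAt FH (fH x) x)
    (hlip : ∀ x y, ‖fH x - fH y‖ ≤ LH * ‖x - y‖)
    (GH : X → EReal) (hGH : ProperConvexLsc GH)
    (hτ : 0 < τH)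
    (g₀ : X) (m : ℕ) (ζ : ℕ → X)
    (w : X) (hw : w = g₀ - fH (ζ 0))
    (hstep : ∀ j < m, IsProx τH GH (ζ j - τH • (fH (ζ j) + w)) (ζ (j + 1))) :
    ((⟪g₀, ζ m - ζ 0⟫
        + (2 - τH * LH) / (2 * τH) * ∑ j ∈ Finset.range m, ‖ζ (j + 1) - ζ j‖ ^ 2 : ℝ) : EReal)
      + GH (ζ m) ≤ GH (ζ 0) := by
  obtain ⟨-, hbot, hconv, -⟩ := hGH
  rcases eq_or_ne (GH (ζ 0)) ⊤ with htop | htop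
  · simp [htop]
  have hfin : ∀ j ≤ m, GH (ζ j) = (GH (ζ j)).toReal := by
    intro j hj
    refine (EReal.coe_toReal ?_ (hbot _)).symm
    induction j with
    | zero => exact htop
    | succ j ih => exact (hstep j hj).ne_top (ih (by omega))
  have hdecrease := add_sum_range_le_of_succ_add_le
    (V := fun j => (GH (ζ j)).toReal + (FH (ζ j) + ⟪w, ζ j - ζ 0⟫))
    (d := fun j => (2 - τH * LH) / (2 * τH) * ‖ζ (j + 1) - ζ j‖ ^ 2) fun j hj =>
      (hstep j hj).sufficient_decrease hconv hτ (fun x => (hgrad x).add_inner_sub w (ζ 0))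
        (fun x y => by simpa using hlip x y) (hfin j hj.le) (hfin (j + 1) hj)
  have hfirst := hFconv.inner_le_sub_of_hasGradientAt (hgrad (ζ 0)) (ζ m)
  rw [sub_self, inner_zero_right, ← Finset.mul_sum, hw, inner_sub_left] at hdecrease
  rw [hfin m le_rfl, hfin 0 m.zero_le, ← EReal.coe_add, EReal.coe_le_coe_iff]
  linarith

/-- coarse descent lemma: after `m` forward-backward steps on the
shifted coarse objective `F_H + ⟪w, · - ζ⁰⟫ + G_H` with `w = g₀ - ∇F_H(ζ⁰)`,
`⟨g₀, ζ^m − ζ⁰⟩ + (ε/(2τ_H)) Σ_{j<m} ‖ζ^{j+1} − ζ^j‖² ≤ G_H(ζ⁰) − G_H(ζ^m)`. -/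
theorem coarse_descent_lemma
    {X : Type*} [NormedAddCommGroup X] [InnerProductSpace ℝ X] [CompleteSpace X]
    (FH : X → ℝ) (fH : X → X) (LH τH : ℝ)
    (hFconv : ConvexOn ℝ Set.univ FH)
    (hgrad : ∀ x, HasGradientAt FH (fH x) x)
    (hlip : ∀ x y, ‖fH x - fH y‖ ≤ LH * ‖x - y‖)
    (GH : X → EReal) (hGH : ProperConvexLsc GH)
    (hτ : 0 < τH) (hε : 0 < 2 - τH * LH)
    (g₀ : X) (m : ℕ) (ζ : ℕ → X)
    (w : X) (hw : w = g₀ - fH (ζ 0))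
    (hstep : ∀ j < m, IsProx τH GH (ζ j - τH • (fH (ζ j) + w)) (ζ (j + 1))) :
    ((⟪g₀, ζ m - ζ 0⟫
        + (2 - τH * LH) / (2 * τH) * ∑ j ∈ Finset.range m, ‖ζ (j + 1) - ζ j‖ ^ 2 : ℝ) : EReal)
      + GH (ζ m) ≤ GH (ζ 0) :=
  coarse_descent_lemma_general FH fH LH τH hFconv hgrad hlip GH hGH hτ g₀ m ζ w hw hstep
end

section
/- Let F : X → ℝ be convex differentiable with L-Lipschitz gradient, G proper convex lsc, τ ∈ (0, 1/L), J := F + G. For any z ∈ X and x⁺ := prox_{τG}(z − τ∇F(z)), and any x* ∈ X: J(x⁺) − J(x*) + (1/(2τ))‖x⁺ − x*‖² + ((1 − τL)/(2τ))‖x⁺ − z‖² ≤ (1/(2τ))‖z − x*‖². -/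
open RealInnerProductSpace

/-! The prox point `x⁺` minimises `G + ‖· - y‖² / (2τ)` with `y = z - τ∇F(z)`. Comparing it with
the points of the segment towards `x*`, where `G` lies below its chord, and letting them tend to
`x⁺` gives the three-point inequality with the extra term `‖x* - x⁺‖² / (2τ)`. Expanded around `z`,
it bounds `G x⁺ - G x*` by `⟪∇F(z), x* - x⁺⟫` plus squared distances; the descent lemma and the
gradient inequality of the convex `F` at `z` bound that inner product by
`F x* - F x⁺ + L/2 ‖x⁺ - z‖²`. -/

open AffineMap Filter Topology

section

variable {X : Type*} [NormedAddCommGroup X] [InnerProductSpace ℝ X]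

theorem HasGradientAt.hasDerivAt_comp_lineMap [CompleteSpace X] {F : X → ℝ} {g a b : X} {t : ℝ}
    (h : HasGradientAt F g (lineMap a b t)) :
    HasDerivAt (fun s : ℝ ↦ F (lineMap a b s)) ⟪g, b - a⟫ t := by
  have := h.hasFDerivAt.comp_hasDerivAt t hasDerivAt_lineMap
  rwa [InnerProductSpace.toDual_apply_apply] at this

theorem ConvexOn.inner_le_sub_of_hasGradientAt_s7 [CompleteSpace X] {F : X → ℝ} {s : Set X}
    {g a b : X} (hF : ConvexOn ℝ s F) (ha : a ∈ s) (hb : b ∈ s) (h : HasGradientAt F g a) :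
    ⟪g, b - a⟫ ≤ F b - F a := by
  have hline := (hF.comp_affineMap (lineMap a b)).le_slope_of_hasDerivAt (x := 0) (y := 1)
    (by simpa) (by simpa) one_pos (HasGradientAt.hasDerivAt_comp_lineMap (by simpa))
  simpa [slope_def_field] using hline

theorem le_add_inner_add_sq_of_lipschitz_gradient [CompleteSpace X] {F : X → ℝ} {g : X → X}
    {L : ℝ} (hF : ∀ y, HasGradientAt F (g y) y) (a : X) (hg : ∀ y, ‖g y - g a‖ ≤ L * ‖y - a‖)
    (b : X) : F b ≤ F a + ⟪g a, b - a⟫ + L / 2 * ‖b - a‖ ^ 2 := by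
  set ψ : ℝ → ℝ := fun t ↦ F (lineMap a b t) - t * ⟪g a, b - a⟫ - L / 2 * t ^ 2 * ‖b - a‖ ^ 2
  have hψ' : ∀ t, HasDerivAt ψ
      (⟪g (lineMap a b t) - g a, b - a⟫ - L * t * ‖b - a‖ ^ 2) t := by
    intro t
    refine ((((hF _).hasDerivAt_comp_lineMap).sub ((hasDerivAt_id t).mul_const _)).sub
      (((hasDerivAt_pow 2 t).const_mul (L / 2)).mul_const (‖b - a‖ ^ 2))).congr_deriv ?_
    rw [inner_sub_left]
    push_cast
    ring
  have hψ'_nonpos : ∀ t ∈ interior (Set.Ici (0 : ℝ)),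
      ⟪g (lineMap a b t) - g a, b - a⟫ - L * t * ‖b - a‖ ^ 2 ≤ 0 := by
    intro t ht
    rw [interior_Ici] at ht
    have hdist : ‖lineMap a b t - a‖ = t * ‖b - a‖ := by
      rw [lineMap_apply, vsub_eq_sub, vadd_eq_add, add_sub_cancel_right, norm_smul,
        Real.norm_of_nonneg ht.le]
    rw [sub_nonpos]
    calc ⟪g (lineMap a b t) - g a, b - a⟫ ≤ ‖g (lineMap a b t) - g a‖ * ‖b - a‖ :=
          real_inner_le_norm _ _
      _ ≤ L * ‖lineMap a b t - a‖ * ‖b - a‖ := by gcongr; exact hg _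
      _ = L * t * ‖b - a‖ ^ 2 := by rw [hdist]; ring
  have hanti : AntitoneOn ψ (Set.Ici 0) :=
    antitoneOn_of_hasDerivWithinAt_nonpos (convex_Ici 0)
      (fun t _ ↦ (hψ' t).continuousAt.continuousWithinAt)
      (fun t _ ↦ (hψ' t).hasDerivWithinAt) hψ'_nonpos
  have hψ_le : ψ 1 ≤ ψ 0 := hanti Set.self_mem_Ici (Set.mem_Ici.2 zero_le_one) zero_le_one
  simp only [ψ, lineMap_apply_one, lineMap_apply_zero] at hψ_le
  linarith

theorem norm_smul_add_smul_sq {a b : ℝ} (hab : a + b = 1) (x y : X) :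
    ‖a • x + b • y‖ ^ 2 = a * ‖x‖ ^ 2 + b * ‖y‖ ^ 2 - a * b * ‖x - y‖ ^ 2 := by
  rw [norm_add_sq_real, norm_sub_sq_real, norm_smul, norm_smul, real_inner_smul_left,
    real_inner_smul_right, mul_pow, mul_pow, Real.norm_eq_abs, Real.norm_eq_abs, sq_abs, sq_abs]
  obtain rfl := eq_sub_of_add_eq hab
  ring

theorem EReal.add_coe_le_add_coe_of_le {a b : EReal} {c d A B : ℝ}
    (h : a + (c : EReal) ≤ b + (d : EReal)) (hr : A + d ≤ c + B) :
    a + (A : EReal) ≤ b + (B : EReal) :=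
  calc a + (A : EReal) = a + c + ((A - c : ℝ) : EReal) := by
        rw [add_assoc, ← EReal.coe_add, add_sub_cancel]
    _ ≤ b + d + ((A - c : ℝ) : EReal) := by gcongr
    _ = b + ((d + (A - c) : ℝ) : EReal) := by rw [add_assoc, EReal.coe_add]
    _ ≤ b + (B : EReal) := by gcongr; linarith

section Prox

variable {G : X → EReal} {τ : ℝ} {y p : X}

theorem IsProx.ne_top_of_ne_top (hp : IsProx τ G y p) {w : X} (hw : G w ≠ ⊤) : G p ≠ ⊤ := by
  intro hpt
  have := hp w
  rw [hpt, EReal.top_add_coe, top_le_iff] at this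
  exact EReal.add_ne_top hw (EReal.coe_ne_top _) this

theorem IsProx.add_norm_sub_sq_le
    (hconv : ∀ x y : X, ∀ a b : ℝ, 0 ≤ a → 0 ≤ b → a + b = 1 →
      G (a • x + b • y) ≤ (a : EReal) * G x + (b : EReal) * G y)
    (hbot : ∀ x, G x ≠ ⊥) (hp : IsProx τ G y p) (w : X) :
    G p + ((‖p - y‖ ^ 2 / (2 * τ) + ‖w - p‖ ^ 2 / (2 * τ) : ℝ) : EReal)
      ≤ G w + ((‖w - y‖ ^ 2 / (2 * τ) : ℝ) : EReal) := by
  by_cases hw : G w = ⊤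
  · simp [hw]
  have hpt := hp.ne_top_of_ne_top hw
  obtain ⟨a, ha⟩ : ∃ a : ℝ, G p = a := ⟨_, (EReal.coe_toReal hpt (hbot p)).symm⟩
  obtain ⟨b, hb⟩ : ∃ b : ℝ, G w = b := ⟨_, (EReal.coe_toReal hw (hbot w)).symm⟩
  rw [ha, hb, ← EReal.coe_add, ← EReal.coe_add, EReal.coe_le_coe_iff]
  have hsegment : ∀ t ∈ Set.Ioo (0 : ℝ) 1, a + ‖p - y‖ ^ 2 / (2 * τ)
      + (1 - t) * (‖w - p‖ ^ 2 / (2 * τ)) ≤ b + ‖w - y‖ ^ 2 / (2 * τ) := by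
    rintro t ⟨ht0, ht1⟩
    have hmin := (hp ((1 - t) • p + t • w)).trans
      (add_le_add_left (hconv p w (1 - t) t (by linarith) ht0.le (by ring)) _)
    rw [ha, hb, ← EReal.coe_mul, ← EReal.coe_mul, ← EReal.coe_add, ← EReal.coe_add,
      ← EReal.coe_add, EReal.coe_le_coe_iff,
      show (1 - t) • p + t • w - y = (1 - t) • (p - y) + t • (w - y) by module,
      norm_smul_add_smul_sq (by ring), sub_sub_sub_cancel_right, norm_sub_rev p w] at hmin
    refine le_of_mul_le_mul_left ?_ ht0
    linear_combination hmin
  have hlim : Tendsto (fun t : ℝ ↦ a + ‖p - y‖ ^ 2 / (2 * τ) + (1 - t) * (‖w - p‖ ^ 2 / (2 * τ)))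
      (𝓝[>] 0) (𝓝 (a + ‖p - y‖ ^ 2 / (2 * τ) + (1 - 0) * (‖w - p‖ ^ 2 / (2 * τ)))) :=
    (Continuous.tendsto (by fun_prop) 0).mono_left nhdsWithin_le_nhds
  have hlim_le := le_of_tendsto hlim <| by
    filter_upwards [Ioo_mem_nhdsGT one_pos] using hsegment
  linarith

end Prox

end

theorem forward_backward_three_point_estimate_general
    {X : Type*} [NormedAddCommGroup X] [InnerProductSpace ℝ X] [CompleteSpace X]
    (F : X → ℝ) (f : X → X) (L τ : ℝ)
    (hFconv : ConvexOn ℝ Set.univ F)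
    (hgradF : ∀ y, HasGradientAt F (f y) y)
    (hlipF : ∀ y y', ‖f y - f y'‖ ≤ L * ‖y - y'‖)
    (G : X → EReal) (hG : ProperConvexLsc G)
    (hτ : 0 < τ)
    (z xplus xstar : X)
    (hprox : IsProx τ G (z - τ • f z) xplus) :
    G xplus + ((F xplus + 1 / (2 * τ) * ‖xplus - xstar‖ ^ 2
        + (1 - τ * L) / (2 * τ) * ‖xplus - z‖ ^ 2 : ℝ) : EReal)
      ≤ G xstar + ((F xstar + 1 / (2 * τ) * ‖z - xstar‖ ^ 2 : ℝ) : EReal) := by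
  refine EReal.add_coe_le_add_coe_of_le (hprox.add_norm_sub_sq_le hG.2.2.1 hG.2.1 xstar) ?_
  have hdescent := le_add_inner_add_sq_of_lipschitz_gradient hgradF z (hlipF · z) xplus
  have hconvex := hFconv.inner_le_sub_of_hasGradientAt_s7 (Set.mem_univ z) (Set.mem_univ xstar)
    (hgradF z)
  have hexpand (x : X) : ‖x - (z - τ • f z)‖ ^ 2 / (2 * τ)
      = ‖x - z‖ ^ 2 / (2 * τ) + ⟪f z, x - z⟫ + τ / 2 * ‖f z‖ ^ 2 := by
    rw [show x - (z - τ • f z) = (x - z) + τ • f z by abel, norm_add_sq_real,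
      real_inner_smul_right, norm_smul, Real.norm_eq_abs, mul_pow, sq_abs, real_inner_comm]
    field_simp
  have hcoeff : (1 - τ * L) / (2 * τ) = 1 / (2 * τ) - L / 2 := by field_simp
  rw [hexpand, hexpand, hcoeff, norm_sub_rev xstar xplus, norm_sub_rev z xstar]
  linear_combination hdescent + hconvex

/-- forward-backward descent estimate: for `x⁺ = prox_{τG}(z − τ∇F(z))`
and any `x*`,
`J(x⁺) − J(x*) + (1/(2τ))‖x⁺ − x*‖² + ((1 − τL)/(2τ))‖x⁺ − z‖² ≤ (1/(2τ))‖z − x*‖²`. -/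
theorem forward_backward_three_point_estimate
    {X : Type*} [NormedAddCommGroup X] [InnerProductSpace ℝ X] [CompleteSpace X]
    (F : X → ℝ) (f : X → X) (L τ : ℝ)
    (hFconv : ConvexOn ℝ Set.univ F)
    (hgradF : ∀ y, HasGradientAt F (f y) y)
    (hlipF : ∀ y y', ‖f y - f y'‖ ≤ L * ‖y - y'‖)
    (G : X → EReal) (hG : ProperConvexLsc G)
    (hτ : 0 < τ) (hτL : τ < 1 / L)
    (z xplus xstar : X)
    (hprox : IsProx τ G (z - τ • f z) xplus) :
    G xplus + ((F xplus + 1 / (2 * τ) * ‖xplus - xstar‖ ^ 2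
        + (1 - τ * L) / (2 * τ) * ‖xplus - z‖ ^ 2 : ℝ) : EReal)
      ≤ G xstar + ((F xstar + 1 / (2 * τ) * ‖z - xstar‖ ^ 2 : ℝ) : EReal) :=
  forward_backward_three_point_estimate_general F f L τ hFconv hgradF hlipF G hG hτ z xplus xstar
    hprox
end

section
/- Let {a_k} be a nonincreasing sequence of nonnegative reals satisfying a_{k+1}² ≤ C(a_k − a_{k+1}) for all k ≥ 0, where C > 0. Then a_k ≤ (1/k) max{4C, a_0} for all k ≥ 1. -/
/-- recursion lemma of Karimi–Vavasis: if `a` is a nonincreasing nonnegative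
sequence with `a_{k+1}² ≤ C(a_k − a_{k+1})` for all `k`, then `a_k ≤ (1/k) max{4C, a_0}`
for all `k ≥ 1`. -/
theorem recursion_lemma_sublinear_rate
    (a : ℕ → ℝ) (C : ℝ) (hC : 0 < C)
    (hnonneg : ∀ k, 0 ≤ a k)
    (hmono : ∀ k, a (k + 1) ≤ a k)
    (hrec : ∀ k, a (k + 1) ^ 2 ≤ C * (a k - a (k + 1))) :
    ∀ k : ℕ, 1 ≤ k → a k ≤ (1 / (k : ℝ)) * max (4 * C) (a 0) := by
  intro k hk
  set M := max (4 * C) (a 0) with hMdef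
  have hM4 : 4 * C ≤ M := le_max_left _ _
  have hMpos : 0 < M := lt_of_lt_of_le (by linarith) hM4
  induction k, hk using Nat.le_induction with
  | base =>
    have : a 1 ≤ a 0 := hmono 0
    have h0 : a 0 ≤ M := le_max_right _ _
    simpa using this.trans h0
  | succ k hk ih =>
    have hkr : (1:ℝ) ≤ (k:ℝ) := by exact_mod_cast hk
    have hkpos : (0:ℝ) < (k:ℝ) := by linarith
    have hk1 : (0:ℝ) < (k:ℝ) + 1 := by linarith
    have ih' : a k * (k:ℝ) ≤ M := by
      have := ih
      rw [div_mul_eq_mul_div, one_mul] at this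
      exact (le_div_iff₀ hkpos).mp (by simpa using this)
    have hcast : ((k + 1 : ℕ) : ℝ) = (k:ℝ) + 1 := by push_cast; ring
    rw [hcast, show (1 / ((k:ℝ)+1) * M) = M / ((k:ℝ)+1) by ring, le_div_iff₀ hk1]
    rcases le_or_gt (a (k+1)) (M / (2*(k:ℝ))) with h | h
    · have h2k : (0:ℝ) < 2*(k:ℝ) := by linarith
      have h' : a (k+1) * (2*(k:ℝ)) ≤ M := (le_div_iff₀ h2k).mp h
      have hx := hnonneg (k+1)
      nlinarith [mul_nonneg hx hkpos.le]
    · have h2k : (0:ℝ) < 2*(k:ℝ) := by linarith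
      have h' : M < a (k+1) * (2*(k:ℝ)) := (div_lt_iff₀ h2k).mp h
      have hx := hnonneg (k+1)
      have hr := hrec k
      nlinarith [mul_pos hkpos hkpos, sq_nonneg (a (k+1) * (k:ℝ) - M),
        mul_le_mul_of_nonneg_left hr (le_of_lt (mul_pos hkpos hkpos)),
        mul_lt_mul_of_pos_left h' hMpos, sq_nonneg ((k:ℝ) - 1)]
end

section
/- Let S be a diagonal matrix with nonnegative entries (a sum of subsampling operators) such that every diagonal entry of the symmetrization Sym S (averaging entries at frequency k and −k) is strictly positive, and let 𝓕 be the unitary discrete Fourier transform. Then T := Re(𝓕* S 𝓕) = 𝓕* (Sym S) 𝓕 restricted to real vectors is symmetric positive definite, hence invertible. -/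
open Matrix Real

/-!
Conjugating the DFT matrix reverses its rows, `conj 𝓕 = P 𝓕` with `P` the permutation
`k ↦ -k`. Hence for real `S` the entrywise conjugate of `𝓕* S 𝓕` is `𝓕* (P S P) 𝓕`, and averaging
gives `Re (𝓕* S 𝓕) = 𝓕* (Sym S) 𝓕`. Since `𝓕` is unitary (orthogonality of the characters of
`ℤ/n`), this matrix is congruent to the positive diagonal matrix `Sym S`, hence positive
definite, and its entries are those of the real matrix `T`.
-/

namespace AddChar

lemma IsPrimitive.compAddMonoidHom_ringEquiv {R S R' : Type*} [CommRing R] [CommRing S]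
    [CommMonoid R'] {ψ : AddChar S R'} (hψ : ψ.IsPrimitive) (e : R ≃+* S) :
    (ψ.compAddMonoidHom e.toAddMonoidHom).IsPrimitive := by
  intro a ha h
  refine hψ (e.map_ne_zero_iff.mpr ha) (DFunLike.ext _ _ fun x => ?_)
  simpa using DFunLike.congr_fun h (e.symm x)

end AddChar

section FourierMatrix

variable {R : Type*} [CommRing R] [Fintype R]

noncomputable def fourierMatrix (ψ : AddChar R ℂ) : Matrix R R ℂ :=
  of fun j k => (1 / Real.sqrt (Fintype.card R) : ℂ) * ψ (-(j * k))

lemma star_fourierMatrix_apply (ψ : AddChar R ℂ) (j k : R) :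
    star (fourierMatrix ψ j k) = fourierMatrix ψ (-j) k := by
  simp [fourierMatrix, AddChar.map_neg_eq_conj]

lemma conjTranspose_fourierMatrix_mul_self [DecidableEq R] {ψ : AddChar R ℂ}
    (hψ : ψ.IsPrimitive) : (fourierMatrix ψ)ᴴ * fourierMatrix ψ = 1 := by
  ext a b
  have hcard : ((Real.sqrt (Fintype.card R) : ℝ) : ℂ) ^ 2 = Fintype.card R := by
    rw [← Complex.ofReal_pow, Real.sq_sqrt (Nat.cast_nonneg _), Complex.ofReal_natCast]
  have hterm : ∀ j, star (fourierMatrix ψ j a) * fourierMatrix ψ j b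
      = (Fintype.card R : ℂ)⁻¹ * ψ (j * (a - b)) := by
    intro j
    rw [star_fourierMatrix_apply]
    simp only [fourierMatrix, of_apply, neg_mul, neg_neg, mul_sub]
    rw [sub_eq_add_neg, AddChar.map_add_eq_mul, ← hcard]
    ring
  simp only [mul_apply, conjTranspose_apply, hterm, ← Finset.mul_sum,
    AddChar.sum_mulShift _ hψ, sub_eq_zero, one_apply]
  split_ifs <;> simp

end FourierMatrix

noncomputable def dftMatrix (n : ℕ) : Matrix (Fin n) (Fin n) ℂ :=
  of fun j k => (1 / Real.sqrt n : ℂ) *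
    Complex.exp (-(2 * (π : ℂ) * Complex.I * (j.val : ℂ) * (k.val : ℂ)) / (n : ℂ))

section FinDFT

open Fin.CommRing

variable (n : ℕ) [NeZero n]

noncomputable def finStdAddChar : AddChar (Fin n) ℂ :=
  ZMod.stdAddChar.compAddMonoidHom (ZMod.finEquiv n).toAddMonoidHom

lemma isPrimitive_finStdAddChar : (finStdAddChar n).IsPrimitive :=
  (ZMod.isPrimitive_stdAddChar n).compAddMonoidHom_ringEquiv _

lemma fourierMatrix_finStdAddChar : fourierMatrix (finStdAddChar n) = dftMatrix n := by
  ext j k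
  have hval : ∀ i : Fin n, ZMod.finEquiv n i = (i.val : ZMod n) := fun i => by
    conv_lhs => rw [← Fin.cast_val_eq_self i]
    exact map_natCast _ _
  have harg : (ZMod.finEquiv n).toAddMonoidHom (-(j * k))
      = ((-(j.val * k.val : ℤ) : ℤ) : ZMod n) := by
    change ZMod.finEquiv n _ = _
    rw [map_neg, map_mul, hval, hval]
    push_cast
    ring
  simp only [fourierMatrix, finStdAddChar, dftMatrix, of_apply, Fintype.card_fin,
    AddChar.compAddMonoidHom_apply]
  rw [harg, ZMod.stdAddChar_coe]
  push_cast
  ring_nf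

lemma conjTranspose_dftMatrix_mul_self : (dftMatrix n)ᴴ * dftMatrix n = 1 := by
  rw [← fourierMatrix_finStdAddChar]
  exact conjTranspose_fourierMatrix_mul_self (isPrimitive_finStdAddChar n)

lemma star_dftMatrix_apply (j k : Fin n) : star (dftMatrix n j k) = dftMatrix n (-j) k := by
  rw [← fourierMatrix_finStdAddChar]
  exact star_fourierMatrix_apply _ j k

end FinDFT

section

variable {ι : Type*} [Fintype ι]

lemma map_re_conjTranspose_mul_diagonal_mul [DecidableEq ι] {F : Matrix ι ι ℂ} {σ : ι → ι}
    (hσ : σ.Involutive) (hF : ∀ j k, star (F j k) = F (σ j) k) (d : ι → ℝ) :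
    (Fᴴ * diagonal (fun k => (d k : ℂ)) * F).map (fun z => (z.re : ℂ))
      = Fᴴ * diagonal (fun k => (((d k + d (σ k)) / 2 : ℝ) : ℂ)) * F := by
  ext a b
  rw [map_apply, mul_apply, mul_apply]
  simp only [mul_diagonal, conjTranspose_apply]
  have hconj : star (∑ k, star (F k a) * d k * F k b)
      = ∑ k, star (F k a) * d (σ k) * F k b := calc
    _ = ∑ k, star (F (σ k) a) * d (σ (σ k)) * F (σ k) b := by
      rw [star_sum]
      refine Finset.sum_congr rfl fun k _ => ?_
      rw [← hF, ← hF, hσ k, star_mul', star_mul', star_star, Complex.star_def,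
        Complex.conj_ofReal]
    _ = _ := Equiv.sum_comp (hσ.toPerm σ) fun k => star (F k a) * d (σ k) * F k b
  rw [Complex.re_eq_add_conj, ← Complex.star_def, hconj, ← Finset.sum_add_distrib, Finset.sum_div]
  refine Finset.sum_congr rfl fun k _ => ?_
  push_cast
  ring

open ComplexOrder in
lemma Matrix.PosDef.of_map_ofReal {A : Matrix ι ι ℝ} (hA : (A.map ((↑) : ℝ → ℂ)).PosDef) :
    A.PosDef := by
  rw [posDef_iff_dotProduct_mulVec] at hA ⊢
  refine ⟨(isHermitian_map_iff (fun _ => by simp) Complex.ofReal_injective).mp hA.1, fun x hx => ?_⟩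
  have hxc : ((↑) ∘ x : ι → ℂ) ≠ 0 := fun h => hx (funext fun i => by simpa using congrFun h i)
  have hcast : star ((↑) ∘ x : ι → ℂ) ⬝ᵥ (A.map (↑) *ᵥ ((↑) ∘ x))
      = ((star x ⬝ᵥ (A *ᵥ x) : ℝ) : ℂ) := by
    simp [dotProduct, mulVec]
  exact Complex.zero_lt_real.mp (hcast ▸ hA.2 hxc)

open ComplexOrder in
lemma posDef_map_re_conjTranspose_mul_diagonal_mul [DecidableEq ι] {F : Matrix ι ι ℂ}
    {σ : ι → ι} (hσ : σ.Involutive) (hF : ∀ j k, star (F j k) = F (σ j) k)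
    (hF_inj : Function.Injective F.mulVec) {d : ι → ℝ} (hd : ∀ k, 0 < (d k + d (σ k)) / 2) :
    ((Fᴴ * diagonal (fun k => (d k : ℂ)) * F).map Complex.re).PosDef := by
  refine PosDef.of_map_ofReal ?_
  rw [map_map, Function.comp_def, map_re_conjTranspose_mul_diagonal_mul hσ hF]
  refine PosDef.conjTranspose_mul_mul_same (posDef_diagonal_iff.mpr fun k => ?_) hF_inj
  exact_mod_cast hd k

end

theorem dft_subsampling_posdef_general
    (n : ℕ) [NeZero n]
    (F : Matrix (Fin n) (Fin n) ℂ)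
    (hF : F = Matrix.of fun j k : Fin n => (1 / Real.sqrt n : ℂ) *
      Complex.exp (-(2 * (π : ℂ) * Complex.I * (j.val : ℂ) * (k.val : ℂ)) / (n : ℂ)))
    (d : Fin n → ℝ)
    (S : Matrix (Fin n) (Fin n) ℂ) (hS : S = Matrix.diagonal (fun k => (d k : ℂ)))
    (hpos : ∀ k : Fin n, 0 < (d k + d (-k)) / 2)
    (SymS : Matrix (Fin n) (Fin n) ℂ)
    (hSymS : SymS = Matrix.diagonal (fun k => (((d k + d (-k)) / 2 : ℝ) : ℂ)))
    (T : Matrix (Fin n) (Fin n) ℝ)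
    (hT : T = (Fᴴ * S * F).map Complex.re) :
    (∀ y : Fin n → ℝ,
      (Fᴴ * SymS * F).mulVec (fun i => (y i : ℂ)) = fun i => ((T.mulVec y i : ℝ) : ℂ))
    ∧ T.IsSymm ∧ T.PosDef ∧ IsUnit T.det := by
  obtain rfl : F = dftMatrix n := hF
  subst hS hSymS hT
  have hF_inj : Function.Injective (dftMatrix n).mulVec :=
    Function.LeftInverse.injective (g := (dftMatrix n)ᴴ.mulVec) fun v => by
      rw [mulVec_mulVec, conjTranspose_dftMatrix_mul_self, one_mulVec]
  have hT := posDef_map_re_conjTranspose_mul_diagonal_mul neg_involutive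
    (star_dftMatrix_apply n) hF_inj hpos
  refine ⟨fun y => ?_, isHermitian_iff_isSymm.mp hT.isHermitian, hT, hT.det_pos.ne'.isUnit⟩
  rw [← map_re_conjTranspose_mul_diagonal_mul neg_involutive (star_dftMatrix_apply n) d]
  funext i
  exact (RingHom.map_mulVec Complex.ofRealHom _ y i).symm

/-- for the unitary DFT `𝓕` and a nonnegative diagonal subsampling matrix `S`
whose frequency-symmetrisation `Sym S` has strictly positive diagonal, the real matrix
`T = Re(𝓕* S 𝓕)` agrees with `𝓕* (Sym S) 𝓕` on real vectors and is symmetric positive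
definite, hence invertible. -/
theorem dft_subsampling_posdef
    (n : ℕ) [NeZero n]
    (F : Matrix (Fin n) (Fin n) ℂ)
    (hF : F = Matrix.of fun j k : Fin n => (1 / Real.sqrt n : ℂ) *
      Complex.exp (-(2 * (π : ℂ) * Complex.I * (j.val : ℂ) * (k.val : ℂ)) / (n : ℂ)))
    (d : Fin n → ℝ) (hd : ∀ k, 0 ≤ d k)
    (S : Matrix (Fin n) (Fin n) ℂ) (hS : S = Matrix.diagonal (fun k => (d k : ℂ)))
    (hpos : ∀ k : Fin n, 0 < (d k + d (-k)) / 2)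
    (SymS : Matrix (Fin n) (Fin n) ℂ)
    (hSymS : SymS = Matrix.diagonal (fun k => (((d k + d (-k)) / 2 : ℝ) : ℂ)))
    (T : Matrix (Fin n) (Fin n) ℝ)
    (hT : T = (Fᴴ * S * F).map Complex.re) :
    (∀ y : Fin n → ℝ,
      (Fᴴ * SymS * F).mulVec (fun i => (y i : ℂ)) = fun i => ((T.mulVec y i : ℝ) : ℂ))
    ∧ T.IsSymm ∧ T.PosDef ∧ IsUnit T.det :=
  dft_subsampling_posdef_general n F hF d S hS hpos SymS hSymS T hT
end
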